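/- arXiv:2307.04057 — 2 statements merged into one kernel-verified Lean document; each statement's English description precedes it below -/
import Mathlib

section
/- (Proposition 7, linear word analogies in attention-based embeddings.) Suppose the embeddings exactly factorize N, i.e., w_i^T c̃_j = N_{ij} for all i, j ∈ [|V|], and suppose the |V|×p transformed context-embedding matrix C̃ (with rows c̃_j^T) has rank p, with left inverse C̃† = (C̃^T C̃)^{−1} C̃^T. Then for any words a, a*, b, b* such that the sets W = {w_b, w_{a*}} and W* = {w_{b*}, w_a} each have exactly two elements, w_{b*} = w_{a*} − w_a + w_b + C̃†( ρ̄^{W,W*} + σ̄^{W} − σ̄^{W*} + δ̄^{W,W*} ) and also w_{b*} = w_{a*} − w_a + w_b + C̃†( ξ̄^{W,W*} + σ̄^{W} − σ̄^{W*} ), where ρ̄^{W,W*}, σ̄^{W}, σ̄^{W*}, δ̄^{W,W*}, ξ̄^{W,W*} ∈ ℝ^{|V|} are the vectors with j-th coordinates ρ̄_j^{W,W*} = log( p̄(c_j | W*) / p̄(c_j | W) ), σ̄_j^{W} = log( p̄(W | c_j) / Π_{w_i ∈ W} p̄(w_i | c_j) ), σ̄_j^{W*} = log( p̄(W* | c_j)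 / Π_{w_i ∈ W*} p̄(w_i | c_j) ), δ̄_j^{W,W*} = log( p̄(W*) / p̄(W) ), ξ̄_j^{W,W*} = log( p̄(W* | c_j) / p̄(W | c_j) ). -/
/-! By the exact factorization, `C̃` maps `w_{b*} + w_a - w_{a*} - w_b` to the vector with
coordinates `log (p̄(w_{b*},c_j) p̄(w_a,c_j) / (p̄(w_b,c_j) p̄(w_{a*},c_j)))`: the `log |V|` terms and
the marginals `p̄(c_j)` cancel. The error vector `ξ̄ + σ̄ - σ̄*` telescopes to the same log-ratio of
pair products, and `ρ̄ + δ̄ = ξ̄`. Full column rank makes `C̃ᵀC̃` invertible, so `C̃†` is a left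
inverse of `C̃` and recovers the embedding offset. -/

open Matrix BigOperators

namespace Matrix

variable {m n K : Type*} [Fintype m] [Fintype n] [DecidableEq n]

theorem isUnit_of_rank_eq_card [Field K] {M : Matrix n n K} (h : M.rank = Fintype.card n) :
    IsUnit M := by
  have hrange : LinearMap.range M.mulVecLin = ⊤ :=
    Submodule.eq_top_of_finrank_eq (by rw [← rank, h, Module.finrank_fintype_fun_eq_card])
  exact mulVec_surjective_iff_isUnit.mp (LinearMap.range_eq_top.mp hrange)

theorem transpose_mul_self_inv_mul_transpose_mul_self [Field K] [LinearOrder K]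
    [IsStrictOrderedRing K] {A : Matrix m n K} (h : A.rank = Fintype.card n) :
    (Aᵀ * A)⁻¹ * Aᵀ * A = 1 := by
  have hunit : IsUnit (Aᵀ * A) := isUnit_of_rank_eq_card (by rw [rank_transpose_mul_self, h])
  rw [Matrix.mul_assoc]
  exact nonsing_inv_mul _ ((isUnit_iff_isUnit_det _).mp hunit)

end Matrix

namespace Real

theorem log_div_add_log_div_sub_log_div {a b x y : ℝ} (ha : a ≠ 0) (hb : b ≠ 0) (hx : x ≠ 0)
    (hy : y ≠ 0) : log (a / b) + log (b / x) - log (a / y) = log y - log x := by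
  rw [log_div ha hb, log_div hb hx, log_div ha hy]
  ring

theorem log_div_div_add_log_div {a b x y : ℝ} (ha : a ≠ 0) (hb : b ≠ 0) (hx : x ≠ 0)
    (hy : y ≠ 0) : log ((a / x) / (b / y)) + log (x / y) = log (a / b) := by
  rw [log_div (div_ne_zero ha hx) (div_ne_zero hb hy), log_div ha hx, log_div hb hy,
    log_div hx hy, log_div ha hb]
  ring

end Real

theorem attention_linear_word_analogies_general
    (V p : ℕ)
    -- joint quantities `p̄(wᵢ, cⱼ)` (not necessarily symmetric) and marginals `p̄(cⱼ)`
    (pj : Fin V → Fin V → ℝ) (hpj : ∀ i j, 0 < pj i j)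
    (pc : Fin V → ℝ) (hpc : ∀ j, 0 < pc j)
    -- the matrix `N`
    (N : Fin V → Fin V → ℝ)
    (hN : N = fun i j => Real.log (pj i j / pc j) + Real.log V)
    -- center embeddings `wᵢ` and transformed context embeddings `c̃ⱼ`
    (w : Fin V → Fin p → ℝ) (ctilde : Fin V → Fin p → ℝ)
    -- exact factorization `wᵢᵀ c̃ⱼ = N i j`
    (hfact : ∀ i j : Fin V, w i ⬝ᵥ ctilde j = N i j)
    -- the transformed context-embedding matrix, its rank-`p` assumption, and left inverse
    (Ctilde : Matrix (Fin V) (Fin p) ℝ) (hC : Ctilde = Matrix.of ctilde)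
    (hrank : Ctilde.rank = p)
    (Cdag : Matrix (Fin p) (Fin V) ℝ)
    (hCdag : Cdag = (Ctilde.transpose * Ctilde)⁻¹ * Ctilde.transpose)
    -- the four words and the two word sets, each with exactly two elements
    (a astar b bstar : Fin V) (hW : b ≠ astar) (hWstar : bstar ≠ a)
    (W Wstar : Finset (Fin V)) (hWdef : W = {b, astar}) (hWstardef : Wstar = {bstar, a})
    -- set quantities `p̄(W), p̄(W*)` and set-context joints `p̄(W,cⱼ), p̄(W*,cⱼ)`
    (pW pWstar : ℝ) (hpW : 0 < pW) (hpWstar : 0 < pWstar)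
    (pWc pWstarc : Fin V → ℝ) (hpWc : ∀ j, 0 < pWc j) (hpWstarc : ∀ j, 0 < pWstarc j)
    -- the error-term vectors
    (ρ : Fin V → ℝ) (hρ : ρ = fun j => Real.log ((pWstarc j / pWstar) / (pWc j / pW)))
    (σ : Fin V → ℝ)
    (hσ : σ = fun j => Real.log ((pWc j / pc j) / ∏ i ∈ W, (pj i j / pc j)))
    (σs : Fin V → ℝ)
    (hσs : σs = fun j => Real.log ((pWstarc j / pc j) / ∏ i ∈ Wstar, (pj i j / pc j)))
    (δ : Fin V → ℝ) (hδ : δ = fun _ => Real.log (pWstar / pW))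
    (ξ : Fin V → ℝ) (hξ : ξ = fun j => Real.log ((pWstarc j / pc j) / (pWc j / pc j))) :
    w bstar = w astar - w a + w b + Cdag.mulVec (ρ + σ - σs + δ) ∧
    w bstar = w astar - w a + w b + Cdag.mulVec (ξ + σ - σs) := by
  subst Ctilde Cdag
  have hpmi (i j : Fin V) : pj i j / pc j ≠ 0 := (div_pos (hpj i j) (hpc j)).ne'
  have hfactor : of ctilde *ᵥ (w bstar + w a - w astar - w b) = ξ + σ - σs := by
    funext j
    subst hN hξ hσ hσs hWdef hWstardef
    simp only [mulVec, of_apply, Pi.add_apply, Pi.sub_apply,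
      Finset.prod_pair hW, Finset.prod_pair hWstar]
    rw [Real.log_div_add_log_div_sub_log_div (div_pos (hpWstarc j) (hpc j)).ne'
      (div_pos (hpWc j) (hpc j)).ne' (mul_ne_zero (hpmi b j) (hpmi astar j))
      (mul_ne_zero (hpmi bstar j) (hpmi a j)), Real.log_mul (hpmi _ _) (hpmi _ _),
      Real.log_mul (hpmi _ _) (hpmi _ _), dotProduct_comm]
    simp only [sub_dotProduct, add_dotProduct, hfact]
    ring
  have hρδ : ρ + σ - σs + δ = ξ + σ - σs := by
    suffices ρ + δ = ξ by rw [← this]; abel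
    funext j
    subst hρ hδ hξ
    simp only [Pi.add_apply]
    rw [Real.log_div_div_add_log_div (hpWstarc j).ne' (hpWc j).ne' hpWstar.ne'
      hpW.ne', div_div_div_cancel_right₀ (hpc j).ne']
  have hsolve : (((of ctilde)ᵀ * of ctilde)⁻¹ * (of ctilde)ᵀ) *ᵥ (ξ + σ - σs)
      = w bstar + w a - w astar - w b := by
    rw [← hfactor, mulVec_mulVec,
      transpose_mul_self_inv_mul_transpose_mul_self (by rw [hrank, Fintype.card_fin]),
      one_mulVec]
  rw [hρδ, hsolve]
  constructor <;> abel

/-- **Proposition 7 (linear word analogies in attention-based embeddings).**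
Suppose the embeddings exactly factorize `N`, i.e. `wᵢᵀc̃ⱼ = N i j` for all `i, j`,
where `N i j = log(p̄(wᵢ,cⱼ)/p̄(cⱼ)) + log V` for the (not necessarily symmetric)
strictly positive quantities `p̄`, and the `|V|×p` transformed context-embedding matrix
`C̃` has rank `p`, with left inverse `C̃† = (C̃ᵀC̃)⁻¹C̃ᵀ`.  Then for words `a, a*, b, b*`
such that `W = {w_b, w_{a*}}` and `W* = {w_{b*}, w_a}` each have exactly two elements,
`w_{b*} = w_{a*} − w_a + w_b + C̃†(ρ̄ + σ̄ − σ̄* + δ̄)` and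
`w_{b*} = w_{a*} − w_a + w_b + C̃†(ξ̄ + σ̄ − σ̄*)`. -/
theorem attention_linear_word_analogies
    (V p : ℕ) (hV : 1 ≤ V)
    -- joint quantities `p̄(wᵢ, cⱼ)` (not necessarily symmetric) and marginals `p̄(cⱼ)`
    (pj : Fin V → Fin V → ℝ) (hpj : ∀ i j, 0 < pj i j)
    (pc : Fin V → ℝ) (hpc : ∀ j, 0 < pc j)
    -- the matrix `N`
    (N : Fin V → Fin V → ℝ)
    (hN : N = fun i j => Real.log (pj i j / pc j) + Real.log V)
    -- center embeddings `wᵢ` and transformed context embeddings `c̃ⱼ`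
    (w : Fin V → Fin p → ℝ) (ctilde : Fin V → Fin p → ℝ)
    -- exact factorization `wᵢᵀ c̃ⱼ = N i j`
    (hfact : ∀ i j : Fin V, w i ⬝ᵥ ctilde j = N i j)
    -- the transformed context-embedding matrix, its rank-`p` assumption, and left inverse
    (Ctilde : Matrix (Fin V) (Fin p) ℝ) (hC : Ctilde = Matrix.of ctilde)
    (hrank : Ctilde.rank = p)
    (Cdag : Matrix (Fin p) (Fin V) ℝ)
    (hCdag : Cdag = (Ctilde.transpose * Ctilde)⁻¹ * Ctilde.transpose)
    -- the four words and the two word sets, each with exactly two elements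
    (a astar b bstar : Fin V) (hW : b ≠ astar) (hWstar : bstar ≠ a)
    (W Wstar : Finset (Fin V)) (hWdef : W = {b, astar}) (hWstardef : Wstar = {bstar, a})
    -- set quantities `p̄(W), p̄(W*)` and set-context joints `p̄(W,cⱼ), p̄(W*,cⱼ)`
    (pW pWstar : ℝ) (hpW : 0 < pW) (hpWstar : 0 < pWstar)
    (pWc pWstarc : Fin V → ℝ) (hpWc : ∀ j, 0 < pWc j) (hpWstarc : ∀ j, 0 < pWstarc j)
    -- the error-term vectors
    (ρ : Fin V → ℝ) (hρ : ρ = fun j => Real.log ((pWstarc j / pWstar) / (pWc j / pW)))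
    (σ : Fin V → ℝ)
    (hσ : σ = fun j => Real.log ((pWc j / pc j) / ∏ i ∈ W, (pj i j / pc j)))
    (σs : Fin V → ℝ)
    (hσs : σs = fun j => Real.log ((pWstarc j / pc j) / ∏ i ∈ Wstar, (pj i j / pc j)))
    (δ : Fin V → ℝ) (hδ : δ = fun _ => Real.log (pWstar / pW))
    (ξ : Fin V → ℝ) (hξ : ξ = fun j => Real.log ((pWstarc j / pc j) / (pWc j / pc j))) :
    w bstar = w astar - w a + w b + Cdag.mulVec (ρ + σ - σs + δ) ∧
    w bstar = w astar - w a + w b + Cdag.mulVec (ξ + σ - σs) :=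
  attention_linear_word_analogies_general V p pj hpj pc hpc N hN w ctilde hfact Ctilde hC hrank Cdag
    hCdag a astar b bstar hW hWstar W Wstar hWdef hWstardef pW pWstar hpW hpWstar pWc pWstarc hpWc
    hpWstarc ρ hρ σ hσ σs hσs δ hδ ξ hξ
end

section
/- (Exact version of Proposition 8, linear analogies transfer to transformed attention context embeddings.) Let r, s, t, u ∈ [n] be words satisfying: (i) ν_r ν_s = ν_t ν_u (encoding that p̄({r,s}) = p̄({t,u}) under exact marginal independence within each pair); (ii) the symmetry condition p̄_{ij} = p̄_{ji} for all i, j ∈ [n]; (iii) w_r + w_s = w_t + w_u. Suppose further that the n×p matrix W with rows w_v^T has rank p, i.e., the only x ∈ ℝ^p with w_v^T x = 0 for all v ∈ [n] is x = 0. Then c̃_r + c̃_s = c̃_t + c̃_u. -/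
/-!
Taking logarithms, `wᵢ ⬝ c̃ⱼ = log p̄ᵢⱼ - log νⱼ + log n`. Pairing the analogy
`w_r + w_s = w_t + w_u` with `c̃ᵥ` gives `log p̄ᵣᵥ + log p̄ₛᵥ = log p̄ₜᵥ + log p̄ᵤᵥ`;
by symmetry of `p̄` and `ν_r ν_s = ν_t ν_u` this says that `c̃_r + c̃_s - c̃_t - c̃_u`
is orthogonal to every `w_v`, hence vanishes because the rows of `W` span.
-/

open Matrix BigOperators

theorem eq_of_forall_dotProduct_eq {ι κ R : Type*} [Fintype κ] [Ring R] (w : ι → κ → R)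
    (hw : ∀ x : κ → R, (∀ v, w v ⬝ᵥ x = 0) → x = 0) {a b : κ → R}
    (h : ∀ v, w v ⬝ᵥ a = w v ⬝ᵥ b) : a = b :=
  sub_eq_zero.mp <| hw _ fun v => by rw [dotProduct_sub, h, sub_self]

theorem Real.log_add_log_eq_of_mul_eq {a b c d : ℝ} (ha : a ≠ 0) (hb : b ≠ 0) (hc : c ≠ 0)
    (hd : d ≠ 0) (h : a * b = c * d) : log a + log b = log c + log d := by
  rw [← log_mul ha hb, ← log_mul hc hd, h]

theorem attention_context_embedding_analogy_general
    (n p : ℕ)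
    -- strictly positive joint matrix and strictly positive marginals
    (pj : Fin n → Fin n → ℝ) (hpj : ∀ i j, 0 < pj i j)
    (ν : Fin n → ℝ) (hν : ∀ j, 0 < ν j)
    -- center embeddings and transformed context embeddings with exact factorization
    (w : Fin n → Fin p → ℝ) (ctilde : Fin n → Fin p → ℝ)
    (hfact : ∀ i j : Fin n, w i ⬝ᵥ ctilde j = Real.log (pj i j / ν j) + Real.log n)
    -- the four words
    (r s t u : Fin n)
    -- (i) `p̄({r,s}) = p̄({t,u})` under exact marginal independence within each pair
    (hmarg : ν r * ν s = ν t * ν u)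
    -- (ii) the symmetry condition
    (hsymm : ∀ i j, pj i j = pj j i)
    -- (iii) linear analogy among the center embeddings
    (hana : w r + w s = w t + w u)
    -- the center-embedding matrix `W` has rank `p`
    (hrank : ∀ x : Fin p → ℝ, (∀ v : Fin n, w v ⬝ᵥ x = 0) → x = 0) :
    ctilde r + ctilde s = ctilde t + ctilde u := by
  have hlog : ∀ i j, w i ⬝ᵥ ctilde j = Real.log (pj i j) - Real.log (ν j) + Real.log n :=
    fun i j => by rw [hfact, Real.log_div (hpj i j).ne' (hν j).ne']
  have hjoint : ∀ v, Real.log (pj r v) + Real.log (pj s v)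
      = Real.log (pj t v) + Real.log (pj u v) := fun v => by
    have h := congrArg (· ⬝ᵥ ctilde v) hana
    simp only [add_dotProduct, hlog] at h
    linarith
  have hmarg_log : Real.log (ν r) + Real.log (ν s) = Real.log (ν t) + Real.log (ν u) :=
    Real.log_add_log_eq_of_mul_eq (hν r).ne' (hν s).ne' (hν t).ne' (hν u).ne' hmarg
  refine eq_of_forall_dotProduct_eq w hrank fun v => ?_
  simp only [dotProduct_add, hlog, hsymm v]
  linarith [hjoint v]

/-- **Exact version of Proposition 8 (linear analogies transfer to transformed
attention context embeddings).**  Under the exact factorization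
`wᵢᵀc̃ⱼ = log(p̄ᵢⱼ/νⱼ) + log n` with strictly positive joint `p̄` and marginals `ν`,
if `νᵣνₛ = νₜνᵤ` (encoding `p̄({r,s}) = p̄({t,u})` under exact marginal independence
within each pair), the symmetry condition `p̄ᵢⱼ = p̄ⱼᵢ` holds for all `i, j`,
`wᵣ + wₛ = wₜ + wᵤ`, and the matrix `W` of center embeddings has rank `p` (only
`x = 0` is orthogonal to all its rows), then `c̃ᵣ + c̃ₛ = c̃ₜ + c̃ᵤ`. -/
theorem attention_context_embedding_analogy
    (n p : ℕ) (hn : 1 ≤ n)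
    -- strictly positive joint matrix and strictly positive marginals
    (pj : Fin n → Fin n → ℝ) (hpj : ∀ i j, 0 < pj i j)
    (ν : Fin n → ℝ) (hν : ∀ j, 0 < ν j)
    -- center embeddings and transformed context embeddings with exact factorization
    (w : Fin n → Fin p → ℝ) (ctilde : Fin n → Fin p → ℝ)
    (hfact : ∀ i j : Fin n, w i ⬝ᵥ ctilde j = Real.log (pj i j / ν j) + Real.log n)
    -- the four words
    (r s t u : Fin n)
    -- (i) `p̄({r,s}) = p̄({t,u})` under exact marginal independence within each pair
    (hmarg : ν r * ν s = ν t * ν u)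
    -- (ii) the symmetry condition
    (hsymm : ∀ i j, pj i j = pj j i)
    -- (iii) linear analogy among the center embeddings
    (hana : w r + w s = w t + w u)
    -- the center-embedding matrix `W` has rank `p`
    (hrank : ∀ x : Fin p → ℝ, (∀ v : Fin n, w v ⬝ᵥ x = 0) → x = 0) :
    ctilde r + ctilde s = ctilde t + ctilde u :=
  attention_context_embedding_analogy_general n p pj hpj ν hν w ctilde hfact r s t u hmarg hsymm
    hana hrank
end
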